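/- For every x ∈ ℤ₂ and every k ∈ ℕ, Φ(x) = Φ(L_k(x)) + (Φ(R_k(x))/3^m)·2^k, where m = α(L_k(x)) and division by 3^m means multiplication by the inverse of 3^m in ℤ₂. -/

import Mathlib

noncomputable section

/-- The inverse of `3` in the ring of 2-adic integers. -/
def inv3 : ℤ_[2] := Ring.inverse 3

/-- The `j`-th binary digit of a 2-adic integer (as `0` or `1`). -/
def dig (x : ℤ_[2]) (j : ℕ) : ℕ := if Nat.testBit (x.appr (j + 1)) j then 1 else 0

/-- The number of one digits of `x` in positions `< j`. -/
def digCount (x : ℤ_[2]) (j : ℕ) : ℕ := ∑ i ∈ Finset.range j, dig x i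

/-- Bernstein's formula for the 3x+1 conjugacy map `Φ`:
if `x = ∑_i 2^{d_i}` with `d_0 < d_1 < ⋯`, then `Φ x = -∑_i 2^{d_i} 3^{-i}`. -/
def Phi (x : ℤ_[2]) : ℤ_[2] :=
  -∑' j : ℕ, (dig x j : ℤ_[2]) * 2 ^ j * inv3 ^ digCount x j

/-- `L_k(x)`: the unique natural number `< 2^k` congruent to `x` mod `2^k`. -/
def Lk (k : ℕ) (x : ℤ_[2]) : ℕ := x.appr k

theorem two_pow_dvd_sub_appr (k : ℕ) (x : ℤ_[2]) :
    (2 : ℤ_[2]) ^ k ∣ x - (x.appr k : ℤ_[2]) := by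
  have h := PadicInt.appr_spec k x
  rw [Ideal.mem_span_singleton] at h
  exact_mod_cast h

theorem exists_Rk (k : ℕ) (x : ℤ_[2]) :
    ∃ z : ℤ_[2], x = (x.appr k : ℤ_[2]) + 2 ^ k * z := by
  obtain ⟨c, hc⟩ := two_pow_dvd_sub_appr k x
  exact ⟨c, by rw [← hc]; ring⟩

/-- `R_k(x)`: the unique 2-adic integer with `x = L_k(x) + 2^k · R_k(x)`. -/
def Rk (k : ℕ) (x : ℤ_[2]) : ℤ_[2] := (exists_Rk k x).choose

/-- `α(a)`: the number of ones in the binary expansion of `a`. -/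
def alphaNat (a : ℕ) : ℕ := (Nat.bits a).count true

/-- `b̄_{v,∞} = b · ∑_{i=0}^∞ 2^{v i}` as a 2-adic integer. -/
def bbar (b v : ℕ) : ℤ_[2] := (b : ℤ_[2]) * ∑' i : ℕ, (2 : ℤ_[2]) ^ (v * i)

/-- `b̄_{v,t} = b · ∑_{i=0}^{t-1} 2^{v i}` as a natural number. -/
def bbarFin (b v t : ℕ) : ℕ := b * ∑ i ∈ Finset.range t, 2 ^ (v * i)

/-- The farPoint `fP(x,k)`: the least `r` such that no 2-adic congruent to `x`
mod `2^k` is a fixed point of `Φ` mod `2^{k+r}`, and `∞` if no such `r` exists. -/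
def fP (x k : ℕ) : ℕ∞ :=
  sInf ((↑) '' {r : ℕ | ∀ z : ℤ_[2],
    (2 : ℤ_[2]) ^ k ∣ z - (x : ℤ_[2]) → ¬ (2 : ℤ_[2]) ^ (k + r) ∣ Phi z - z})

end

/-! Write `x = a + 2^k z` with `a < 2^k`. The binary digits of `x` are those of `a` below position
`k` followed by those of `z`, so Bernstein's series for `Φ x` splits after its `k`-th term: the
first `k` terms form the series of `Φ a`, and the term in position `k + i` is the `i`-th term of
the series of `Φ z` times `2^k` and `3^{-α(a)}`, as `a` contributes exactly `α(a)` ones below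
position `k`. -/

open Finset

namespace PadicInt

variable {p : ℕ} [Fact p.Prime]

theorem appr_eq_of_pow_dvd_sub {x : ℤ_[p]} {n a : ℕ} (ha : a < p ^ n)
    (h : (p : ℤ_[p]) ^ n ∣ x - a) : x.appr n = a := by
  have hcast : ((x.appr n : ℕ) : ZMod (p ^ n)) = a :=
    zmod_congr_of_sub_mem_span n x _ a (appr_spec n x) (Ideal.mem_span_singleton.mpr h)
  simpa [ZMod.val_natCast, Nat.mod_eq_of_lt (appr_lt x n), Nat.mod_eq_of_lt ha]
    using congrArg ZMod.val hcast

theorem appr_congr {x y : ℤ_[p]} {n : ℕ} (h : (p : ℤ_[p]) ^ n ∣ x - y) :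
    x.appr n = y.appr n := by
  refine appr_eq_of_pow_dvd_sub (appr_lt y n) ?_
  have hy : (p : ℤ_[p]) ^ n ∣ y - y.appr n := Ideal.mem_span_singleton.mp (appr_spec n y)
  simpa using dvd_add h hy

theorem appr_natCast (a n : ℕ) : (a : ℤ_[p]).appr n = a % p ^ n := by
  refine appr_eq_of_pow_dvd_sub (Nat.mod_lt _ (pow_pos (Fact.out : p.Prime).pos n)) ?_
  refine ⟨(a / p ^ n : ℕ), ?_⟩
  rw [sub_eq_iff_eq_add', ← Nat.cast_pow, ← Nat.cast_mul, ← Nat.cast_add, Nat.mod_add_div]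

end PadicInt

theorem dig_natCast (a j : ℕ) : dig (a : ℤ_[2]) j = if a.testBit j then 1 else 0 := by
  simp [dig, PadicInt.appr_natCast, Nat.testBit_mod_two_pow]

theorem dig_natCast_of_lt_two_pow {a k j : ℕ} (ha : a < 2 ^ k) (hj : k ≤ j) :
    dig (a : ℤ_[2]) j = 0 := by
  rw [dig_natCast, Nat.testBit_lt_two_pow (ha.trans_le (Nat.pow_le_pow_right two_pos hj))]
  rfl

theorem dig_congr {x y : ℤ_[2]} {j : ℕ} (h : (2 : ℤ_[2]) ^ (j + 1) ∣ x - y) :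
    dig x j = dig y j := by
  rw [dig, dig, PadicInt.appr_congr (by exact_mod_cast h)]

theorem dig_add_two_pow_mul_of_lt (a z : ℤ_[2]) {k j : ℕ} (hj : j < k) :
    dig (a + 2 ^ k * z) j = dig a j :=
  dig_congr (by simpa using dvd_mul_of_dvd_left (pow_dvd_pow 2 hj) z)

theorem dig_natCast_add_two_pow_mul_add {a k : ℕ} (ha : a < 2 ^ k) (z : ℤ_[2]) (i : ℕ) :
    dig (a + 2 ^ k * z) (k + i) = dig z i := by
  set b := z.appr (i + 1)
  have hb : (2 : ℤ_[2]) ^ (i + 1) ∣ z - b := by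
    exact_mod_cast Ideal.mem_span_singleton.mp (PadicInt.appr_spec (i + 1) z)
  have hcongr : (2 : ℤ_[2]) ^ (k + i + 1) ∣ (a + 2 ^ k * z) - ((2 ^ k * b + a : ℕ) : ℤ_[2]) := by
    rw [show (a + 2 ^ k * z : ℤ_[2]) - ((2 ^ k * b + a : ℕ) : ℤ_[2]) = 2 ^ k * (z - b) by
      push_cast; ring, add_assoc, pow_add]
    exact mul_dvd_mul_left _ hb
  rw [dig_congr hcongr, dig_natCast, Nat.testBit_two_pow_mul_add _ ha,
    if_neg (show ¬k + i < k by omega), Nat.add_sub_cancel_left]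
  rfl

theorem alphaNat_eq_testBit_zero_add_div_two (n : ℕ) :
    alphaNat n = (if n.testBit 0 then 1 else 0) + alphaNat (n / 2) := by
  rcases Nat.even_or_odd' n with ⟨m, rfl | rfl⟩
  · rcases eq_or_ne m 0 with rfl | hm
    · rfl
    · simp [alphaNat, Nat.bit0_bits m hm]
  · rw [show (2 * m + 1) / 2 = m by omega, alphaNat, alphaNat, Nat.bit1_bits]
    simp [Nat.testBit_zero, add_comm]

theorem alphaNat_eq_sum_testBit {n w : ℕ} (h : n < 2 ^ w) :
    alphaNat n = ∑ j ∈ range w, if n.testBit j then 1 else 0 := by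
  induction w generalizing n with
  | zero => simp [Nat.lt_one_iff.mp (by simpa using h), alphaNat]
  | succ w ih =>
    rw [alphaNat_eq_testBit_zero_add_div_two, sum_range_succ', add_comm,
      ih (by rw [pow_succ] at h; omega)]
    simp only [Nat.testBit_div_two]

theorem digCount_natCast_of_lt_two_pow {a k : ℕ} (ha : a < 2 ^ k) :
    digCount (a : ℤ_[2]) k = alphaNat a := by
  simp only [digCount, dig_natCast, alphaNat_eq_sum_testBit ha]

theorem digCount_add_two_pow_mul_of_le (a z : ℤ_[2]) {k j : ℕ} (hj : j ≤ k) :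
    digCount (a + 2 ^ k * z) j = digCount a j :=
  sum_congr rfl fun _ hi => dig_add_two_pow_mul_of_lt a z ((mem_range.mp hi).trans_le hj)

theorem digCount_natCast_add_two_pow_mul_add {a k : ℕ} (ha : a < 2 ^ k) (z : ℤ_[2]) (i : ℕ) :
    digCount (a + 2 ^ k * z) (k + i) = alphaNat a + digCount z i := by
  rw [digCount, sum_range_add, ← digCount, digCount_add_two_pow_mul_of_le _ _ le_rfl,
    digCount_natCast_of_lt_two_pow ha]
  simp only [dig_natCast_add_two_pow_mul_add ha, digCount]

noncomputable def phiTerm (x : ℤ_[2]) (j : ℕ) : ℤ_[2] := dig x j * 2 ^ j * inv3 ^ digCount x j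

theorem Phi_eq_neg_tsum_phiTerm (x : ℤ_[2]) : Phi x = -∑' j, phiTerm x j := rfl

theorem summable_phiTerm (x : ℤ_[2]) : Summable (phiTerm x) := by
  refine Summable.of_norm_bounded summable_geometric_two fun j => ?_
  have h2 : ‖(2 : ℤ_[2])‖ = 1 / 2 := by simpa using PadicInt.norm_p (p := 2)
  calc ‖phiTerm x j‖ = ‖(dig x j : ℤ_[2])‖ * (1 / 2) ^ j * ‖inv3 ^ digCount x j‖ := by
        rw [phiTerm, norm_mul, norm_mul, norm_pow, h2]
    _ ≤ 1 * (1 / 2) ^ j * 1 := by gcongr <;> exact PadicInt.norm_le_one _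
    _ = (1 / 2) ^ j := by ring

theorem Phi_natCast_of_lt_two_pow {a k : ℕ} (ha : a < 2 ^ k) :
    Phi a = -∑ j ∈ range k, phiTerm a j := by
  rw [Phi, tsum_eq_sum fun j hj => ?_]
  · rfl
  · simp [dig_natCast_of_lt_two_pow ha (by simpa using hj)]

theorem phiTerm_add_two_pow_mul_of_lt (a z : ℤ_[2]) {k j : ℕ} (hj : j < k) :
    phiTerm (a + 2 ^ k * z) j = phiTerm a j := by
  rw [phiTerm, phiTerm, dig_add_two_pow_mul_of_lt a z hj,
    digCount_add_two_pow_mul_of_le a z hj.le]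

theorem phiTerm_natCast_add_two_pow_mul_add {a k : ℕ} (ha : a < 2 ^ k) (z : ℤ_[2]) (i : ℕ) :
    phiTerm (a + 2 ^ k * z) (i + k) = phiTerm z i * inv3 ^ alphaNat a * 2 ^ k := by
  rw [phiTerm, phiTerm, add_comm i k, dig_natCast_add_two_pow_mul_add ha,
    digCount_natCast_add_two_pow_mul_add ha, pow_add, pow_add]
  ring

theorem Phi_natCast_add_two_pow_mul {a k : ℕ} (ha : a < 2 ^ k) (z : ℤ_[2]) :
    Phi (a + 2 ^ k * z) = Phi a + Phi z * inv3 ^ alphaNat a * 2 ^ k := by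
  have hhead : ∑ j ∈ range k, phiTerm (a + 2 ^ k * z) j = -Phi a := by
    rw [Phi_natCast_of_lt_two_pow ha, neg_neg]
    exact sum_congr rfl fun j hj => phiTerm_add_two_pow_mul_of_lt a z (mem_range.mp hj)
  have htail : ∑' i, phiTerm (a + 2 ^ k * z) (i + k) = -Phi z * inv3 ^ alphaNat a * 2 ^ k := by
    simp only [phiTerm_natCast_add_two_pow_mul_add ha]
    rw [((summable_phiTerm z).mul_right _).tsum_mul_right, (summable_phiTerm z).tsum_mul_right,
      Phi_eq_neg_tsum_phiTerm, neg_neg]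
  rw [Phi_eq_neg_tsum_phiTerm, ← (summable_phiTerm _).sum_add_tsum_nat_add k, hhead, htail]
  ring

/-- `Φ(x) = Φ(L_k(x)) + (Φ(R_k(x))/3^m)·2^k` with `m = α(L_k(x))`. -/
theorem stmt8 (x : ℤ_[2]) (k : ℕ) :
    Phi x = Phi ((Lk k x : ℕ) : ℤ_[2]) +
      Phi (Rk k x) * inv3 ^ alphaNat (Lk k x) * 2 ^ k := by
  calc Phi x = Phi ((Lk k x : ℕ) + 2 ^ k * Rk k x) := congrArg Phi (exists_Rk k x).choose_spec
    _ = _ := Phi_natCast_add_two_pow_mul (PadicInt.appr_lt x k) _
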